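/- Let n ≥ 1 and 0 ≤ d ≤ n, and let ρ_S be an (n+1)×(n+1) complex matrix with rows and columns indexed by 0, …, n. Define the 2ⁿ×2ⁿ matrix ρ with entries indexed by bitstrings i, j ∈ {0,1}ⁿ by ρ^{i}_{j} = (ρ_S)^{|i|}_{|j|} / √( C(n,|i|)·C(n,|j|) ), where |i| denotes the number of ones of a bitstring (this is the expansion to the full space of a matrix supported on the symmetric subspace). Then for all bitstrings i', j' ∈ {0,1}^d, the partial trace over the last n − d qubits satisfies Σ_{w ∈ {0,1}^{n−d}} ρ^{(i',w)}_{(j',w)} = Σ_{k=0}^{n−d} C(n−d, k) · (ρ_S)^{k+|i'|}_{k+|j'|} / √( C(n, k+|i'|)·C(n, k+|j'|) ), where (i',w) denotes the concatenated bitstring of length n. -/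

import Mathlib

noncomputable section

/-- The weight (number of ones) of a bitstring. -/
def wt {N : ℕ} (f : Fin N → Fin 2) : ℕ := (Finset.univ.filter fun i => f i = 1).card

/-- Concatenation of a bitstring of length `d` with one of length `n − d` (with `d ≤ n`)
into a bitstring of length `n`. -/
def conc (n d : ℕ) (hd : d ≤ n) (i' : Fin d → Fin 2) (w : Fin (n - d) → Fin 2) :
    Fin n → Fin 2 :=
  fun i => if h : (i : ℕ) < d then i' ⟨i, h⟩
    else w ⟨(i : ℕ) - d, by have := i.isLt; omega⟩

/-! Weight is additive under concatenation, so the summand for `w` depends only on `|w|`;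
grouping the strings `w ∈ {0,1}^(n-d)` by weight, exactly `C(n-d, k)` of them have weight `k`. -/

open Finset

lemma wt_eq_sum {N : ℕ} (f : Fin N → Fin 2) : wt f = ∑ i, if f i = 1 then 1 else 0 :=
  card_filter _ _

lemma wt_append {m k : ℕ} (a : Fin m → Fin 2) (b : Fin k → Fin 2) :
    wt (Fin.append a b) = wt a + wt b := by
  simp only [wt_eq_sum, Fin.sum_univ_add, Fin.append_left, Fin.append_right]

lemma wt_comp_cast {m N : ℕ} (h : m = N) (f : Fin N → Fin 2) : wt (f ∘ Fin.cast h) = wt f := by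
  subst h
  rfl

lemma conc_eq_append_comp_cast (n d : ℕ) (hd : d ≤ n) (i' : Fin d → Fin 2)
    (w : Fin (n - d) → Fin 2) :
    conc n d hd i' w = Fin.append i' w ∘ Fin.cast (Nat.add_sub_of_le hd).symm := by
  funext i
  simp only [conc, Fin.append, Fin.addCases, Fin.subNat, Function.comp_apply, Fin.val_cast]
  split <;> simp only [eq_rec_constant, Fin.castLT, Fin.cast]

lemma wt_conc (n d : ℕ) (hd : d ≤ n) (i' : Fin d → Fin 2) (w : Fin (n - d) → Fin 2) :
    wt (conc n d hd i' w) = wt i' + wt w := by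
  rw [conc_eq_append_comp_cast, wt_comp_cast, wt_append]

def finTwoArrowEquivFinset (N : ℕ) : (Fin N → Fin 2) ≃ Finset (Fin N) where
  toFun f := univ.filter fun i => f i = 1
  invFun s i := if i ∈ s then 1 else 0
  left_inv f := by
    funext i
    simp only [mem_filter, mem_univ, true_and]
    generalize f i = b
    fin_cases b <;> rfl
  right_inv s := by
    ext i
    by_cases h : i ∈ s <;> simp [h]

lemma sum_apply_wt {M : Type*} [AddCommMonoid M] (N : ℕ) (g : ℕ → M) :
    ∑ w : Fin N → Fin 2, g (wt w) = ∑ k ∈ range (N + 1), N.choose k • g k := by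
  calc ∑ w, g (wt w) = ∑ w, g #(finTwoArrowEquivFinset N w) := rfl
    _ = ∑ k ∈ range (N + 1), N.choose k • g k := by
      rw [(finTwoArrowEquivFinset N).sum_comp (g ·.card), ← powerset_univ, sum_powerset_apply_card,
        card_univ, Fintype.card_fin]

theorem stmt_13_general (n d : ℕ) (hd : d ≤ n) (ρS : ℕ → ℕ → ℂ)
    (ρ : Matrix (Fin n → Fin 2) (Fin n → Fin 2) ℂ)
    (hρ : ∀ i j : Fin n → Fin 2,
      ρ i j = ρS (wt i) (wt j) / (((Real.sqrt ((n.choose (wt i)) * (n.choose (wt j))) : ℝ)) : ℂ)) :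
    ∀ i' j' : Fin d → Fin 2,
      ∑ w : Fin (n - d) → Fin 2, ρ (conc n d hd i' w) (conc n d hd j' w)
        = ∑ k ∈ Finset.range (n - d + 1),
            ((n - d).choose k : ℂ) * ρS (k + wt i') (k + wt j')
              / (((Real.sqrt ((n.choose (k + wt i')) * (n.choose (k + wt j'))) : ℝ)) : ℂ) := by
  intro i' j'
  let g (k : ℕ) : ℂ :=
    ρS (k + wt i') (k + wt j') / ((√(n.choose (k + wt i') * n.choose (k + wt j')) : ℝ) : ℂ)
  calc ∑ w, ρ (conc n d hd i' w) (conc n d hd j' w) = ∑ w, g (wt w) := by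
        simp only [g, hρ, wt_conc, add_comm (wt i'), add_comm (wt j')]
    _ = ∑ k ∈ range (n - d + 1), (n - d).choose k • g k := sum_apply_wt (n - d) g
    _ = _ := by simp only [g, nsmul_eq_mul, mul_div_assoc]

/-- Theorem: for a matrix `ρ` which is the expansion to the full `n`-qubit space of a matrix
`ρS` supported on the symmetric subspace, i.e. `ρ^i_j = (ρS)^{|i|}_{|j|} / √(C(n,|i|)C(n,|j|))`,
the partial trace over the last `n − d` qubits is given by
`(Tr_{n−d} ρ)^{i'}_{j'} = Σ_{k=0}^{n−d} C(n−d,k) (ρS)^{k+|i'|}_{k+|j'|} / √(C(n,k+|i'|)C(n,k+|j'|))`. -/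
theorem stmt_13 (n d : ℕ) (hn : 1 ≤ n) (hd : d ≤ n) (ρS : ℕ → ℕ → ℂ)
    (ρ : Matrix (Fin n → Fin 2) (Fin n → Fin 2) ℂ)
    (hρ : ∀ i j : Fin n → Fin 2,
      ρ i j = ρS (wt i) (wt j) / (((Real.sqrt ((n.choose (wt i)) * (n.choose (wt j))) : ℝ)) : ℂ)) :
    ∀ i' j' : Fin d → Fin 2,
      ∑ w : Fin (n - d) → Fin 2, ρ (conc n d hd i' w) (conc n d hd j' w)
        = ∑ k ∈ Finset.range (n - d + 1),
            ((n - d).choose k : ℂ) * ρS (k + wt i') (k + wt j')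
              / (((Real.sqrt ((n.choose (k + wt i')) * (n.choose (k + wt j'))) : ℝ)) : ℂ) :=
  stmt_13_general n d hd ρS ρ hρ
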